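/- arXiv:math/0610342 — 2 statements merged into one kernel-verified Lean document; each statement's English description precedes it below -/
import Mathlib

section
/- Let 𝓔 be a directed graph, S_𝓔 its graph inverse semigroup with grading φ into the free group 𝔽 on 𝓔¹. Suppose s, t ∈ 𝔽 are such that st⁻¹ involves no cancellation and st⁻¹ = red(ab⁻¹) for paths a, b ∈ 𝓔* with s(a) = s(b) = v and ab⁻¹ reduced. Then φ⁻¹(st⁻¹) = { (aw, bw) : w ∈ 𝓔*, r(w) = v } = (a,v)·E^v·(v,b), where E^v = { (w,w) : r(w) = v }. -/
/-- `pathOk src tgt v l` : `l` is a directed path starting at `v`. -/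
def pathOk {V E : Type*} (src tgt : E → V) : V → List E → Prop
  | _, [] => True
  | v, e :: l => src e = v ∧ pathOk src tgt (tgt e) l

/-- The endpoint of the path `l` starting at `v`. -/
def pend {V E : Type*} (tgt : E → V) (v : V) (l : List E) : V :=
  l.foldl (fun _ e => tgt e) v

/-- The word in the free group on the edges determined by a path
(given as its traversal-order edge list). -/
def wordOf {E : Type*} (l : List E) : FreeGroup E :=
  (l.reverse.map FreeGroup.of).prod

lemma prodOf {E : Type*} (l : List E) :
    (l.map FreeGroup.of).prod = FreeGroup.mk (l.map (fun e => (e, true))) := by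
  induction l with
  | nil => simp [FreeGroup.one_eq_mk]
  | cons e l ih => simp [ih, FreeGroup.of, FreeGroup.mul_mk]

lemma wordOf_mk {E : Type*} (l : List E) :
    wordOf l = FreeGroup.mk (l.reverse.map (fun e => (e, true))) := prodOf _

lemma wordOf_inv_mk {E : Type*} (l : List E) :
    (wordOf l)⁻¹ = FreeGroup.mk (l.map (fun e => (e, false))) := by
  rw [wordOf_mk, FreeGroup.inv_mk, FreeGroup.invRev]
  simp [List.map_reverse, Function.comp_def]

lemma wordOf_append {E : Type*} (w a : List E) :
    wordOf (w ++ a) = wordOf a * wordOf w := by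
  simp [wordOf, List.reverse_append]

lemma wordOf_cons {E : Type*} (e : E) (l : List E) :
    wordOf (e :: l) = wordOf l * FreeGroup.of e := by
  simp [wordOf]

lemma reduce_neg {E : Type*} [DecidableEq E] (N : List E) :
    FreeGroup.reduce (N.map (fun e => (e, false))) = N.map (fun e => (e, false)) := by
  induction N with
  | nil => rfl
  | cons e N ih =>
    rw [List.map_cons, FreeGroup.reduce.cons, ih]
    cases N with
    | nil => rfl
    | cons f N => simp

lemma reduce_pos_neg {E : Type*} [DecidableEq E] (P N : List E)
    (h : ∀ e, P.getLast? = some e → N.head? ≠ some e) :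
    FreeGroup.reduce (P.map (fun e => (e, true)) ++ N.map (fun e => (e, false)))
      = P.map (fun e => (e, true)) ++ N.map (fun e => (e, false)) := by
  induction P with
  | nil => simpa using reduce_neg N
  | cons e P ih =>
    have ih' : FreeGroup.reduce (P.map (fun e => (e, true)) ++ N.map (fun e => (e, false)))
        = P.map (fun e => (e, true)) ++ N.map (fun e => (e, false)) := by
      apply ih
      intro x hx
      apply h
      cases P with
      | nil => simp at hx
      | cons f P => rw [List.getLast?_cons_cons]; simpa using hx
    rw [List.map_cons, List.cons_append, FreeGroup.reduce.cons, ih']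
    cases P with
    | cons f P => simp
    | nil =>
      cases N with
      | nil => rfl
      | cons g N =>
        have : g ≠ e := by
          intro hge
          exact h e (by simp) (by simp [hge])
        simp [Ne.symm this]

lemma toWord_key {E : Type*} [DecidableEq E] (μ ν : List E)
    (h : ¬ ∃ (e : E) (la lb : List E), μ = e :: la ∧ ν = e :: lb) :
    (wordOf μ * (wordOf ν)⁻¹).toWord
      = μ.reverse.map (fun e => (e, true)) ++ ν.map (fun e => (e, false)) := by
  rw [wordOf_mk, wordOf_inv_mk, FreeGroup.mul_mk, FreeGroup.toWord_mk]
  apply reduce_pos_neg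
  intro e h1 h2
  rw [List.getLast?_reverse] at h1
  cases μ with
  | nil => simp at h1
  | cons x μ' =>
    cases ν with
    | nil => simp at h2
    | cons y ν' =>
      simp only [List.head?_cons, Option.some.injEq] at h1 h2
      exact h ⟨e, μ', ν', by rw [h1], by rw [h2]⟩

lemma eq_of_words {E : Type*} [DecidableEq E] (μ ν a b : List E)
    (hμν : ¬ ∃ (e : E) (la lb : List E), μ = e :: la ∧ ν = e :: lb)
    (hab : ¬ ∃ (e : E) (la lb : List E), a = e :: la ∧ b = e :: lb)
    (heq : wordOf μ * (wordOf ν)⁻¹ = wordOf a * (wordOf b)⁻¹) :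
    μ = a ∧ ν = b := by
  have h := congrArg FreeGroup.toWord heq
  rw [toWord_key _ _ hμν, toWord_key _ _ hab] at h
  constructor
  · have h1 := congrArg (List.filter (fun p => p.2)) h
    simp only [List.filter_append, List.filter_map, Function.comp_def,
      List.filter_true, List.filter_false, List.map_nil, List.append_nil] at h1
    have h2 := congrArg (List.map Prod.fst) h1
    simp only [List.map_map, Function.comp_def] at h2
    simpa using List.reverse_injective (by simpa using h2)
  · have h1 := congrArg (List.filter (fun p => !p.2)) h
    simp only [List.filter_append, List.filter_map, Function.comp_def] at h1
    simp only [Bool.not_true, Bool.not_false, List.filter_true, List.filter_false,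
      List.map_nil, List.nil_append] at h1
    have h2 := congrArg (List.map Prod.fst) h1
    simpa [List.map_map, Function.comp_def] using h2

/-- Let `a, b` be paths starting at a common vertex `v` with `a b⁻¹` reduced
(no cancellation, i.e. `a` and `b` do not begin with the same edge) and not
both trivial, so that `s t⁻¹ = red(a b⁻¹) = wordOf a * (wordOf b)⁻¹`.  Then
`φ⁻¹(s t⁻¹) = { (aw, bw) : w a path with r(w) = v } = (a,v)·E^v·(v,b)`:
a pair of paths `(μ, ν)` with common source `u` satisfies
`φ((μ,ν)) = wordOf μ * (wordOf ν)⁻¹ = wordOf a * (wordOf b)⁻¹` iff there is a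
path `w` from `u` ending at `v` with `μ = aw` and `ν = bw` (in traversal-order
lists, `μ = w ++ a` and `ν = w ++ b`). -/
theorem stmt_9 {V E : Type*} (src tgt : E → V) (v : V) (a b : List E)
    (ha : pathOk src tgt v a) (hb : pathOk src tgt v b)
    (hnd : a ≠ [] ∨ b ≠ [])
    (hred : ¬ ∃ (e : E) (la lb : List E), a = e :: la ∧ b = e :: lb) :
    ∀ (u : V) (μ ν : List E), pathOk src tgt u μ → pathOk src tgt u ν →
      (wordOf μ * (wordOf ν)⁻¹ = wordOf a * (wordOf b)⁻¹ ↔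
        ∃ w : List E, pathOk src tgt u w ∧ pend tgt u w = v ∧
          μ = w ++ a ∧ ν = w ++ b) := by
  letI := Classical.decEq E
  have base : ∀ (u : V) (μ ν : List E), pathOk src tgt u μ → pathOk src tgt u ν →
      (¬ ∃ (e : E) (la lb : List E), μ = e :: la ∧ ν = e :: lb) →
      wordOf μ * (wordOf ν)⁻¹ = wordOf a * (wordOf b)⁻¹ →
      ∃ w : List E, pathOk src tgt u w ∧ pend tgt u w = v ∧ μ = w ++ a ∧ ν = w ++ b := by
    intro u μ ν hμ hν hnh heq
    obtain ⟨rfl, rfl⟩ := eq_of_words μ ν a b hnh hred heq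
    have huv : u = v := by
      rcases hnd with h | h
      · cases μ with
        | nil => exact absurd rfl h
        | cons f a' => exact hμ.1.symm.trans ha.1
      · cases ν with
        | nil => exact absurd rfl h
        | cons f b' => exact hν.1.symm.trans hb.1
    exact ⟨[], trivial, huv, by simp, by simp⟩
  have fwd : ∀ (μ : List E) (u : V) (ν : List E), pathOk src tgt u μ → pathOk src tgt u ν →
      wordOf μ * (wordOf ν)⁻¹ = wordOf a * (wordOf b)⁻¹ →
      ∃ w : List E, pathOk src tgt u w ∧ pend tgt u w = v ∧ μ = w ++ a ∧ ν = w ++ b := by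
    intro μ
    induction μ with
    | nil =>
      intro u ν hμ hν heq
      exact base u [] ν hμ hν (by rintro ⟨e, la, lb, h1, -⟩; simp at h1) heq
    | cons e μ' ih =>
      intro u ν hμ hν heq
      by_cases hc : ∃ ν', ν = e :: ν'
      · obtain ⟨ν', rfl⟩ := hc
        have heq' : wordOf μ' * (wordOf ν')⁻¹ = wordOf a * (wordOf b)⁻¹ := by
          rw [← heq, wordOf_cons, wordOf_cons]
          group
        obtain ⟨w, hw, hpend, rfl, rfl⟩ := ih (tgt e) ν' hμ.2 hν.2 heq'
        exact ⟨e :: w, ⟨hμ.1, hw⟩, hpend, rfl, rfl⟩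
      · refine base u (e :: μ') ν hμ hν ?_ heq
        rintro ⟨f, la, lb, h1, h2⟩
        have : f = e := by have := congrArg List.head? h1; simp at this; exact this.symm
        exact hc ⟨lb, by rw [h2, this]⟩
  intro u μ ν hμ hν
  constructor
  · exact fwd μ u ν hμ hν
  · rintro ⟨w, hw, hpend, rfl, rfl⟩
    rw [wordOf_append, wordOf_append]
    group
end

section
/- Let φ : S → G be a homomorphism of an inverse semigroup S onto a group G with H = φ⁻¹(1_G), and suppose H = E(S) (i.e., S is E-unitary with respect to φ). Then for every f ∈ ℂS supported on a single fiber S_g = φ⁻¹(g), setting f' = Σ_{s ∈ S_g} f(s) s* s ∈ ℂE(S), one has f'* f' = f* f. Consequently the restriction map ε : ℂS → ℂE(S) is positive. -/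
set_option linter.unusedSectionVars false
set_option maxHeartbeats 1000000

/-- Convolution product on the complex semigroup algebra `ℂS`. -/
noncomputable def cmul {S : Type*} [Semigroup S] (f g : S →₀ ℂ) : S →₀ ℂ :=
  f.sum fun s a => g.sum fun t b => Finsupp.single (s * t) (a * b)

/-- The involution `f* = Σ conj(f(s)) s*` on `ℂS`. -/
noncomputable def cstar {S : Type*} [Semigroup S] (star : S → S) (f : S →₀ ℂ) :
    S →₀ ℂ :=
  f.sum fun s a => Finsupp.single (star s) ((starRingEnd ℂ) a)

/- The restriction map `ε : ℂS → ℂH`, for `H = {s : p s}`. -/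
open Classical in
noncomputable def ceps {S : Type*} [Semigroup S] (p : S → Prop) (f : S →₀ ℂ) :
    S →₀ ℂ :=
  f.sum fun s a => if p s then Finsupp.single s a else 0

section Semi
variable {S : Type*} [Semigroup S] (st : S → S)
    (hst1 : ∀ s, s * st s * s = s)
    (hst2 : ∀ s, st s * s * st s = st s)
    (hstUniq : ∀ s t : S, s * t * s = s → t * s * t = t → t = st s)

include hst1 hst2 hstUniq

theorem st_idem (e : S) (he : e * e = e) : st e = e := by
  have := hstUniq e e (by rw [he, he]) (by rw [he, he])
  exact this.symm

theorem st_st (s : S) : st (st s) = s :=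
  (hstUniq (st s) s (hst2 s) (hst1 s)).symm

theorem idem_mul_idem (e f : S) (he : e * e = e) (hf : f * f = f) :
    (e * f) * (e * f) = e * f := by
  set x := st (e * f) with hx
  have h1 : (e * f) * (f * x * e) * (e * f) = e * f := by
    have h : (e * f) * (f * x * e) * (e * f) = (e * (f * f)) * x * ((e * e) * f) := by
      simp only [mul_assoc]
    rw [h, hf, he]; exact hst1 (e * f)
  have h2 : (f * x * e) * (e * f) * (f * x * e) = f * x * e := by
    have h : (f * x * e) * (e * f) * (f * x * e) = f * (x * ((e * e) * (f * f)) * x) * e := by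
      simp only [mul_assoc]
    rw [h, he, hf]
    have h' : x * (e * f) * x = x := hst2 (e * f)
    rw [mul_assoc x (e * f) x] at h'
    rw [mul_assoc x (e * f) x, h']
  have hfxe : f * x * e = x := hstUniq (e * f) (f * x * e) h1 h2
  have hxidem : x * x = x := by
    conv_lhs => rw [← hfxe]
    have h : (f * x * e) * (f * x * e) = f * (x * (e * f) * x) * e := by simp only [mul_assoc]
    rw [h, hst2, hfxe]
  have hefx : e * f = x := by
    have h3 : x * (e * f) * x = x := hst2 (e * f)
    have h4 : (e * f) * x * (e * f) = e * f := hst1 (e * f)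
    have h := hstUniq x (e * f) h3 h4
    rw [h, st_idem st hst1 hst2 hstUniq x hxidem]
  rw [hefx]; exact hxidem

theorem idem_comm (e f : S) (he : e * e = e) (hf : f * f = f) :
    e * f = f * e := by
  have hef := idem_mul_idem st hst1 hst2 hstUniq e f he hf
  have hfe := idem_mul_idem st hst1 hst2 hstUniq f e hf he
  have h5 : (e * f) * (f * e) * (e * f) = e * f := by
    have h : (e * f) * (f * e) * (e * f) = (e * (f * f)) * ((e * e) * f) := by
      simp only [mul_assoc]
    rw [h, hf, he]; exact hef
  have h6 : (f * e) * (e * f) * (f * e) = f * e := by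
    have h : (f * e) * (e * f) * (f * e) = (f * (e * e)) * ((f * f) * e) := by
      simp only [mul_assoc]
    rw [h, he, hf]; exact hfe
  have := hstUniq (e * f) (f * e) h5 h6
  rw [this, st_idem st hst1 hst2 hstUniq (e * f) hef]

theorem ss_idem (s : S) : (st s * s) * (st s * s) = st s * s := by
  have h : (st s * s) * (st s * s) = st s * (s * st s * s) := by simp only [mul_assoc]
  rw [h, hst1]

theorem sss_idem (s : S) : (s * st s) * (s * st s) = s * st s := by
  have h : (s * st s) * (s * st s) = s * (st s * s * st s) := by simp only [mul_assoc]
  rw [h, hst2]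

theorem st_mul (a b : S) : st (a * b) = st b * st a := by
  have h1 : (a * b) * (st b * st a) * (a * b) = a * b := by
    have h : (a * b) * (st b * st a) * (a * b) = a * ((b * st b) * (st a * a)) * b := by
      simp only [mul_assoc]
    rw [h, idem_comm st hst1 hst2 hstUniq _ _ (sss_idem st hst1 hst2 hstUniq b)
      (ss_idem st hst1 hst2 hstUniq a)]
    have h' : a * (st a * a * (b * st b)) * b = (a * st a * a) * (b * st b * b) := by
      simp only [mul_assoc]
    rw [h', hst1, hst1]
  have h2 : (st b * st a) * (a * b) * (st b * st a) = st b * st a := by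
    have h : (st b * st a) * (a * b) * (st b * st a) = st b * ((st a * a) * (b * st b)) * st a := by
      simp only [mul_assoc]
    rw [h, idem_comm st hst1 hst2 hstUniq _ _ (ss_idem st hst1 hst2 hstUniq a)
      (sss_idem st hst1 hst2 hstUniq b)]
    have h' : st b * (b * st b * (st a * a)) * st a = (st b * b * st b) * (st a * a * st a) := by
      simp only [mul_assoc]
    rw [h', hst2, hst2]
  exact (hstUniq (a * b) (st b * st a) h1 h2).symm

end Semi

section Fiber
variable {S G : Type*} [Semigroup S] [Group G] (st : S → S)
    (hst1 : ∀ s, s * st s * s = s)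
    (hst2 : ∀ s, st s * s * st s = st s)
    (hstUniq : ∀ s t : S, s * t * s = s → t * s * t = t → t = st s)
    (φ : S → G) (hhom : ∀ a b : S, φ (a * b) = φ a * φ b)
    (hEunitary : ∀ s : S, φ s = 1 ↔ s * s = s)

include hst1 hst2 hstUniq hhom

theorem phi_st (s : S) : φ (st s) = (φ s)⁻¹ := by
  have h : φ s * φ (st s) * φ s = φ s := by rw [← hhom, ← hhom, hst1]
  have h2 : φ s * φ (st s) = 1 := by
    have : (φ s * φ (st s)) * φ s = 1 * φ s := by rw [h, one_mul]
    exact mul_right_cancel this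
  exact (inv_eq_of_mul_eq_one_right h2).symm

include hEunitary

theorem fiber_key (g : G) (s t : S) (hs : φ s = g) (ht : φ t = g) :
    (st s * s) * (st t * t) = st s * t := by
  have hest : s * st t = t * st s := by
    have hidem : (s * st t) * (s * st t) = s * st t := by
      rw [← hEunitary, hhom, phi_st st hst1 hst2 hstUniq φ hhom, hs, ht, mul_inv_cancel]
    have := st_idem st hst1 hst2 hstUniq _ hidem
    rw [st_mul st hst1 hst2 hstUniq, st_st st hst1 hst2 hstUniq] at this
    rw [← this]
  have hu : (st s * t) * (st s * t) = st s * t := by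
    rw [← hEunitary, hhom, phi_st st hst1 hst2 hstUniq φ hhom, hs, ht, inv_mul_cancel]
  have h : (st s * s) * (st t * t) = st s * (s * st t) * t := by simp only [mul_assoc]
  rw [h, hest]
  have h' : st s * (t * st s) * t = (st s * t) * (st s * t) := by simp only [mul_assoc]
  rw [h', hu]

end Fiber

section Alg
variable {S : Type*} [Semigroup S] (st : S → S)

theorem cstar_add (f g : S →₀ ℂ) : cstar st (f + g) = cstar st f + cstar st g := by
  unfold cstar
  exact Finsupp.sum_add_index' (by simp) (by intros; simp [map_add, Finsupp.single_add])

theorem cmul_add_left (f g h : S →₀ ℂ) : cmul (f + g) h = cmul f h + cmul g h := by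
  unfold cmul
  exact Finsupp.sum_add_index' (by simp) (by
    intro s a b
    rw [← Finsupp.sum_add]
    apply Finsupp.sum_congr
    intro t _
    rw [add_mul, Finsupp.single_add])

theorem cmul_add_right (f g h : S →₀ ℂ) : cmul f (g + h) = cmul f g + cmul f h := by
  unfold cmul
  rw [← Finsupp.sum_add]
  apply Finsupp.sum_congr
  intro s _
  exact Finsupp.sum_add_index' (by simp) (by intros; rw [mul_add, Finsupp.single_add])

/-- Expansion of `cmul (cstar st (f.sum single∘σ)) (f.sum single∘σ)` as a double sum. -/
theorem cmul_cstar_sigma (σ : S → S) (f : S →₀ ℂ) :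
    cmul (cstar st (f.sum fun s a => Finsupp.single (σ s) a))
         (f.sum fun s a => Finsupp.single (σ s) a)
      = f.sum fun s a => f.sum fun t b =>
          Finsupp.single (st (σ s) * σ t) ((starRingEnd ℂ) a * b) := by
  have hstar : cstar st (f.sum fun s a => Finsupp.single (σ s) a)
      = f.sum fun s a => Finsupp.single (st (σ s)) ((starRingEnd ℂ) a) := by
    unfold cstar
    rw [Finsupp.sum_sum_index (by simp) (by intros; simp [map_add, Finsupp.single_add])]
    apply Finsupp.sum_congr
    intro s _
    rw [Finsupp.sum_single_index (by simp)]
  rw [hstar]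
  unfold cmul
  rw [Finsupp.sum_sum_index (by simp) (by
    intro u b₁ b₂
    rw [← Finsupp.sum_add]
    apply Finsupp.sum_congr
    intro t _
    rw [add_mul, Finsupp.single_add])]
  apply Finsupp.sum_congr
  intro s _
  rw [Finsupp.sum_single_index (by simp)]
  rw [Finsupp.sum_sum_index (by simp) (by intros; rw [mul_add, Finsupp.single_add])]
  apply Finsupp.sum_congr
  intro t _
  rw [Finsupp.sum_single_index (by simp)]

open Classical in
theorem ceps_eq_filter (p : S → Prop) (f : S →₀ ℂ) :
    ceps p f = f.filter p := by
  classical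
  unfold ceps
  ext t
  rw [Finsupp.sum_apply]
  rw [Finsupp.sum]
  have : ∀ s ∈ f.support,
      (if p s then Finsupp.single s (f s) else 0) t
        = if s = t then (if p t then f t else 0) else 0 := by
    intro s _
    by_cases hst : s = t
    · subst hst
      by_cases hp : p s <;> simp [hp]
    · by_cases hp : p s <;> simp [hp, Finsupp.single_apply, hst]
  rw [Finset.sum_congr rfl this, Finset.sum_ite_eq' f.support t]
  by_cases ht : t ∈ f.support
  · simp [ht, Finsupp.filter_apply]
  · have : f t = 0 := Finsupp.notMem_support_iff.mp ht
    simp [ht, Finsupp.filter_apply, this]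

open Classical in
theorem filter_eq_self_of (p : S → Prop) (f : S →₀ ℂ) (h : ∀ s ∈ f.support, p s) :
    f.filter p = f := by
  classical
  ext t
  rw [Finsupp.filter_apply]
  by_cases ht : t ∈ f.support
  · simp [h t ht]
  · have : f t = 0 := Finsupp.notMem_support_iff.mp ht
    simp [this]

open Classical in
theorem filter_eq_zero_of (p : S → Prop) (f : S →₀ ℂ) (h : ∀ s ∈ f.support, ¬ p s) :
    f.filter p = 0 := by
  classical
  ext t
  rw [Finsupp.filter_apply]
  by_cases ht : t ∈ f.support
  · simp [h t ht]
  · have : f t = 0 := Finsupp.notMem_support_iff.mp ht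
    split_ifs <;> simp [this]

theorem cmul_cstar_expand (A B : S →₀ ℂ) :
    cmul (cstar st A) B = A.sum fun s a => B.sum fun t b =>
      Finsupp.single (st s * t) ((starRingEnd ℂ) a * b) := by
  unfold cstar cmul
  rw [Finsupp.sum_sum_index (by simp) (by
    intro u b₁ b₂
    rw [← Finsupp.sum_add]
    apply Finsupp.sum_congr
    intro t _
    rw [add_mul, Finsupp.single_add])]
  apply Finsupp.sum_congr
  intro s _
  rw [Finsupp.sum_single_index (by simp)]

/-- Support of `cmul (cstar st A) B`. -/
theorem support_cmul_cstar (A B : S →₀ ℂ) (x : S)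
    (hx : x ∈ (cmul (cstar st A) B).support) :
    ∃ s ∈ A.support, ∃ t ∈ B.support, x = st s * t := by
  classical
  rw [cmul_cstar_expand] at hx
  have h1 := Finsupp.support_sum hx
  rw [Finset.mem_biUnion] at h1
  obtain ⟨s, hs, hx1⟩ := h1
  have h2 := Finsupp.support_sum hx1
  rw [Finset.mem_biUnion] at h2
  obtain ⟨t, ht, hx2⟩ := h2
  have h3 := Finsupp.support_single_subset hx2
  rw [Finset.mem_singleton] at h3
  exact ⟨s, hs, t, ht, h3⟩

theorem cstar_finset_sum {ι : Type*} (T : Finset ι) (F : ι → S →₀ ℂ) :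
    cstar st (∑ γ ∈ T, F γ) = ∑ γ ∈ T, cstar st (F γ) := by
  exact map_sum (AddMonoidHom.mk' (cstar st) (cstar_add st)) F T

theorem cmul_finset_sum_left {ι : Type*} (T : Finset ι) (F : ι → S →₀ ℂ) (B : S →₀ ℂ) :
    cmul (∑ γ ∈ T, F γ) B = ∑ γ ∈ T, cmul (F γ) B := by
  exact map_sum (AddMonoidHom.mk' (fun u => cmul u B) (fun a b => cmul_add_left a b B)) F T

theorem cmul_finset_sum_right {ι : Type*} (A : S →₀ ℂ) (T : Finset ι) (F : ι → S →₀ ℂ) :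
    cmul A (∑ γ ∈ T, F γ) = ∑ γ ∈ T, cmul A (F γ) := by
  exact map_sum (AddMonoidHom.mk' (fun v => cmul A v) (fun a b => cmul_add_right A a b)) F T

open Classical in
theorem filter_finset_sum {ι : Type*} (p : S → Prop) (T : Finset ι) (F : ι → S →₀ ℂ) :
    Finsupp.filter p (∑ γ ∈ T, F γ) = ∑ γ ∈ T, Finsupp.filter p (F γ) := by
  classical
  exact map_sum (AddMonoidHom.mk' (Finsupp.filter p : (S →₀ ℂ) → (S →₀ ℂ))
    (fun a b => Finsupp.filter_add)) F T

end Alg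

section Main
variable {S G : Type*} [Semigroup S] [Group G] (st : S → S)
    (hst1 : ∀ s, s * st s * s = s)
    (hst2 : ∀ s, st s * s * st s = st s)
    (hstUniq : ∀ s t : S, s * t * s = s → t * s * t = t → t = st s)
    (φ : S → G) (hhom : ∀ a b : S, φ (a * b) = φ a * φ b)
    (hEunitary : ∀ s : S, φ s = 1 ↔ s * s = s)

include hst1 hst2 hstUniq hhom hEunitary

theorem part1_lemma (g : G) (f : S →₀ ℂ) (hf : ∀ s ∈ f.support, φ s = g) :
    cmul (cstar st (f.sum fun s a => Finsupp.single (st s * s) a))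
         (f.sum fun s a => Finsupp.single (st s * s) a)
      = cmul (cstar st f) f := by
  rw [cmul_cstar_sigma st (fun s => st s * s) f, cmul_cstar_expand st f f]
  apply Finsupp.sum_congr
  intro s hs
  apply Finsupp.sum_congr
  intro t ht
  congr 1
  rw [st_idem st hst1 hst2 hstUniq _ (ss_idem st hst1 hst2 hstUniq s)]
  exact fiber_key st hst1 hst2 hstUniq φ hhom hEunitary g s t (hf s hs) (hf t ht)

open Classical in
theorem key_lemma (A : S →₀ ℂ) :
    Finsupp.filter (fun s => φ s = 1) (cmul (cstar st A) A)
      = ∑ γ ∈ A.support.image φ,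
          cmul
            (cstar st ((A.filter (fun s => φ s = γ)).sum fun s a =>
              Finsupp.single (st s * s) a))
            ((A.filter (fun s => φ s = γ)).sum fun s a =>
              Finsupp.single (st s * s) a) := by
  classical
  set T := A.support.image φ with hT
  set F : G → (S →₀ ℂ) := fun γ => A.filter (fun s => φ s = γ) with hF
  have hFsupp : ∀ γ, ∀ s ∈ (F γ).support, φ s = γ := by
    intro γ s hs
    rw [hF] at hs
    simp only [Finsupp.support_filter, Finset.mem_filter] at hs
    exact hs.2
  have hdecomp : A = ∑ γ ∈ T, F γ := by
    ext s
    rw [Finsupp.finset_sum_apply]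
    have h : ∀ γ ∈ T, (F γ) s = if φ s = γ then A s else 0 := by
      intro γ _
      rw [hF]
      simp [Finsupp.filter_apply]
    rw [Finset.sum_congr rfl h, Finset.sum_ite_eq T (φ s)]
    by_cases hs : s ∈ A.support
    · rw [if_pos (by rw [hT]; exact Finset.mem_image_of_mem φ hs)]
    · rw [Finsupp.notMem_support_iff.mp hs]
      split_ifs <;> rfl
  have hsum1 : cmul (cstar st A) A = ∑ γ ∈ T, ∑ δ ∈ T, cmul (cstar st (F γ)) (F δ) := by
    conv_lhs => rw [hdecomp]
    rw [cstar_finset_sum, cmul_finset_sum_left]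
    exact Finset.sum_congr rfl fun γ _ => cmul_finset_sum_right _ T F
  rw [hsum1, filter_finset_sum]
  apply Finset.sum_congr rfl
  intro γ hγ
  rw [filter_finset_sum]
  have hterm : ∀ δ ∈ T, Finsupp.filter (fun s => φ s = 1) (cmul (cstar st (F γ)) (F δ))
      = if δ = γ then cmul (cstar st (F γ)) (F γ) else 0 := by
    intro δ _
    by_cases hδ : δ = γ
    · subst hδ
      rw [if_pos rfl]
      apply filter_eq_self_of
      intro x hx
      obtain ⟨s, hs, t, ht, rfl⟩ := support_cmul_cstar st _ _ x hx
      show φ (st s * t) = 1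
      rw [hhom, phi_st st hst1 hst2 hstUniq φ hhom, hFsupp _ s hs, hFsupp _ t ht,
        inv_mul_cancel]
    · rw [if_neg hδ]
      apply filter_eq_zero_of
      intro x hx
      obtain ⟨s, hs, t, ht, rfl⟩ := support_cmul_cstar st _ _ x hx
      show ¬ φ (st s * t) = 1
      rw [hhom, phi_st st hst1 hst2 hstUniq φ hhom, hFsupp _ s hs, hFsupp _ t ht]
      intro hcon
      rw [inv_mul_eq_one] at hcon
      exact hδ hcon.symm
  rw [Finset.sum_congr rfl hterm, Finset.sum_ite_eq' T γ, if_pos hγ]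
  exact (part1_lemma st hst1 hst2 hstUniq φ hhom hEunitary γ (F γ) (hFsupp γ)).symm

end Main

/-- Let `φ : S → G` be a homomorphism of an inverse semigroup `S` onto a group
`G` with `φ⁻¹(1) = E(S)` (i.e. `S` is `E`-unitary with respect to `φ`).  For
every `f ∈ ℂS` supported on a single fiber `S_g = φ⁻¹(g)`, setting
`f' = Σ_{s ∈ S_g} f(s) s* s ∈ ℂE(S)` one has `f'* f' = f* f`.  Consequently
the restriction map `ε : ℂS → ℂE(S)` is positive: it carries finite sums of
elements `g* g` to finite sums of elements `h* h` with each `h` supported on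
idempotents. -/
theorem stmt_11 {S G : Type*} [Semigroup S] [Group G] (star : S → S)
    (hst1 : ∀ s, s * star s * s = s)
    (hst2 : ∀ s, star s * s * star s = star s)
    (hstUniq : ∀ s t : S, s * t * s = s → t * s * t = t → t = star s)
    (φ : S → G) (hhom : ∀ a b : S, φ (a * b) = φ a * φ b)
    (hsurj : Function.Surjective φ)
    (hEunitary : ∀ s : S, φ s = 1 ↔ s * s = s) :
    (∀ (g : G) (f : S →₀ ℂ), (∀ s ∈ f.support, φ s = g) →
      cmul (cstar star (f.sum fun s a => Finsupp.single (star s * s) a))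
           (f.sum fun s a => Finsupp.single (star s * s) a)
        = cmul (cstar star f) f) ∧
    (∀ x : S →₀ ℂ,
      (∃ (n : ℕ) (g : Fin n → (S →₀ ℂ)), x = ∑ i, cmul (cstar star (g i)) (g i)) →
      ∃ (m : ℕ) (h : Fin m → (S →₀ ℂ)),
        (∀ i, ∀ s ∈ (h i).support, s * s = s) ∧
        ceps (fun s => φ s = 1) x = ∑ i, cmul (cstar star (h i)) (h i)) := by
  classical
  constructor
  · exact part1_lemma star hst1 hst2 hstUniq φ hhom hEunitary
  · rintro x ⟨n, g, rfl⟩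
    set K : (Σ _ : Fin n, G) → (S →₀ ℂ) := fun q =>
      ((g q.1).filter (fun s => φ s = q.2)).sum fun s a =>
        Finsupp.single (star s * s) a with hK
    set Big : Finset (Σ _ : Fin n, G) :=
      Finset.univ.sigma (fun i => (g i).support.image φ) with hBig
    refine ⟨Big.card, fun j => K (Big.equivFin.symm j), ?_, ?_⟩
    · intro j s hs
      have h1 := Finsupp.support_sum hs
      rw [Finset.mem_biUnion] at h1
      obtain ⟨t, _, hst⟩ := h1
      have h3 := Finsupp.support_single_subset hst
      rw [Finset.mem_singleton] at h3
      rw [h3]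
      exact ss_idem star hst1 hst2 hstUniq t
    · rw [ceps_eq_filter, filter_finset_sum]
      have step1 : ∀ i : Fin n,
          Finsupp.filter (fun s => φ s = 1) (cmul (cstar star (g i)) (g i))
            = ∑ γ ∈ (g i).support.image φ, cmul (cstar star (K ⟨i, γ⟩)) (K ⟨i, γ⟩) :=
        fun i => key_lemma star hst1 hst2 hstUniq φ hhom hEunitary (g i)
      rw [Finset.sum_congr rfl (fun i _ => step1 i)]
      rw [← Finset.sum_sigma Finset.univ (fun i => (g i).support.image φ)
        (fun q => cmul (cstar star (K q)) (K q))]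
      rw [← Finset.sum_coe_sort Big (fun q => cmul (cstar star (K q)) (K q))]
      exact (Equiv.sum_comp Big.equivFin.symm
        (fun q : ↥Big => cmul (cstar star (K ↑q)) (K ↑q))).symm
end
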